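/- arXiv:2305.19453 — 4 statements merged into one kernel-verified Lean document; each statement's English description precedes it below -/
import Mathlib

section
/- Let d be a pseudometric consistent with a preference profile σ over m alternatives and n agents. Fix a threshold τ < 1/m and let A' ⊆ A be the set of alternatives whose plurality score (number of agents ranking them first) is at least τ·n. Then A' is nonempty and min_{X∈A'} SC(X) ≤ (1 + 2/(1 − τ·m)) · min_{X∈A} SC(X). -/
/-!
Every agent's favourite alternative is at least as close to it as any other alternative `Z`.
Alternatives of plurality score below `τ n` are the favourites of at most `m τ n` agents in
total, so the set `T` of agents whose favourite lies in `A'` has at least `n (1 - τ m)` members.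
If `i ∈ T` is the member of `T` closest to `Z`, then `|T| d(i, Z) ≤ SC(Z)`, and its favourite `W ∈ A'`
satisfies `d(Z, W) ≤ 2 d(i, Z)`, whence `SC(W) ≤ SC(Z) + 2 n d(i, Z) ≤ (1 + 2 n / |T|) SC(Z)`;
the minimiser of `SC` over `A'` costs at most `SC(W)`.
-/

open Finset Function

theorem forall_le_iff_argmin_eq {α β : Type*} [LinearOrder β] [WellFoundedLT β] [Nonempty α]
    {f : α → β} (hf : Injective f) {x : α} : (∀ y, f x ≤ f y) ↔ argmin f = x :=
  ⟨fun h => hf ((argmin_le f x).antisymm (h _)), fun h => h ▸ fun y => argmin_le f y⟩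

section Fiber

variable {α β : Type*} [Fintype α] [Fintype β] [DecidableEq β]

theorem card_filter_card_fiber_lt_le (f : α → β) {t : ℝ} (ht : 0 ≤ t) :
    (#{a | (#{a' | f a' = f a} : ℝ) < t} : ℝ) ≤ Fintype.card β * t := by
  set L : Finset α := {a | (#{a' | f a' = f a} : ℝ) < t}
  have hfiber : ∀ b, (#{a ∈ L | f a = b} : ℝ) ≤ t := by
    intro b
    rcases eq_empty_or_nonempty {a ∈ L | f a = b} with h | ⟨a, ha⟩
    · simpa [h] using ht
    · obtain ⟨haL, rfl⟩ := mem_filter.1 ha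
      refine le_of_lt (lt_of_le_of_lt ?_ (mem_filter.1 haL).2)
      exact_mod_cast card_le_card (monotone_filter_left _ (subset_univ L))
  calc (#L : ℝ) = ∑ b, (#{a ∈ L | f a = b} : ℝ) := by
        exact_mod_cast card_eq_sum_card_fiberwise fun a _ => mem_univ (f a)
    _ ≤ ∑ _b : β, t := sum_le_sum fun b _ => hfiber b
    _ = Fintype.card β * t := by simp

theorem card_sub_mul_le_card_filter_le_card_fiber (f : α → β) {t : ℝ} (ht : 0 ≤ t) :
    (Fintype.card α : ℝ) - Fintype.card β * t ≤ #{a | t ≤ #{a' | f a' = f a}} := by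
  have hsplit : (#{a | t ≤ #{a' | f a' = f a}} : ℝ) + #{a | ¬ t ≤ #{a' | f a' = f a}}
      = Fintype.card α := by
    exact_mod_cast card_filter_add_card_filter_not (s := univ) _
  simp only [not_le] at hsplit
  linarith [card_filter_card_fiber_lt_le f ht]

end Fiber

theorem le_one_add_div_mul_of_mul_le {a n u k x y : ℝ} (hn : 0 < n) (hu : 0 < u) (hk : 0 ≤ k)
    (hy : 0 ≤ y) (ha : n * u ≤ a) (h : a * x ≤ (a + k * n) * y) : x ≤ (1 + k / u) * y := by
  have ha0 : 0 < a := lt_of_lt_of_le (mul_pos hn hu) ha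
  have : k * n * y * u ≤ k * y * a := by
    nlinarith [mul_le_mul_of_nonneg_left ha (mul_nonneg hk hy)]
  rw [← mul_le_mul_iff_of_pos_left (mul_pos ha0 hu)]
  field_simp
  nlinarith

section Metric

variable {N A : Type*} {d : N ⊕ A → N ⊕ A → ℝ}

theorem dist_argmin_le [Nonempty A] {rk : N → A → ℕ} (hinj : ∀ i, Injective (rk i))
    (hcons : ∀ i X Y, rk i X < rk i Y → d (.inl i) (.inr X) ≤ d (.inl i) (.inr Y))
    (i : N) (Z : A) : d (.inl i) (.inr (argmin (rk i))) ≤ d (.inl i) (.inr Z) := by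
  rcases (argmin_le (rk i) Z).lt_or_eq with h | h
  · exact hcons i _ _ h
  · rw [hinj i h]

variable [Fintype N]

variable (d) in
noncomputable def socialCost (X : A) : ℝ := ∑ i, d (.inl i) (.inr X)

theorem socialCost_nonneg (hnn : ∀ a b, 0 ≤ d a b) (X : A) : 0 ≤ socialCost d X :=
  sum_nonneg fun _ _ => hnn _ _

theorem socialCost_le_add_card_mul (htri : ∀ a b c, d a c ≤ d a b + d b c) (Z W : A) :
    socialCost d W ≤ socialCost d Z + Fintype.card N * d (.inr Z) (.inr W) :=
  calc socialCost d W ≤ ∑ i, (d (.inl i) (.inr Z) + d (.inr Z) (.inr W)) :=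
        sum_le_sum fun _ _ => htri _ _ _
    _ = socialCost d Z + Fintype.card N * d (.inr Z) (.inr W) := by
        simp [socialCost, sum_add_distrib]

theorem card_mul_socialCost_le (hnn : ∀ a b, 0 ≤ d a b) (hsym : ∀ a b, d a b = d b a)
    (htri : ∀ a b c, d a c ≤ d a b + d b c) {S : Finset A} {X' : A}
    (hX' : ∀ W ∈ S, socialCost d X' ≤ socialCost d W) (T : Finset N) (Z : A)
    (hT : ∀ i ∈ T, ∃ W ∈ S, d (.inl i) (.inr W) ≤ d (.inl i) (.inr Z)) :
    #T * socialCost d X' ≤ (#T + 2 * Fintype.card N) * socialCost d Z := by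
  have hZ := socialCost_nonneg hnn Z
  rcases T.eq_empty_or_nonempty with rfl | hTne
  · simpa using mul_nonneg (by positivity) hZ
  obtain ⟨i, hiT, hi⟩ := exists_min_image T (fun j => d (.inl j) (.inr Z)) hTne
  obtain ⟨W, hWS, hiW⟩ := hT i hiT
  set δ := d (.inl i) (.inr Z)
  have hTδ : #T * δ ≤ socialCost d Z :=
    calc #T * δ = ∑ _j ∈ T, δ := by simp
      _ ≤ ∑ j ∈ T, d (.inl j) (.inr Z) := sum_le_sum hi
      _ ≤ socialCost d Z := sum_le_sum_of_subset_of_nonneg (subset_univ T) fun _ _ _ => hnn _ _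
  have hZW : d (.inr Z) (.inr W) ≤ 2 * δ := by
    linarith [htri (.inr Z) (.inl i) (.inr W), hsym (.inr Z) (.inl i)]
  have hX'W : socialCost d X' ≤ socialCost d Z + Fintype.card N * (2 * δ) :=
    (hX' W hWS).trans ((socialCost_le_add_card_mul htri Z W).trans (by gcongr))
  calc #T * socialCost d X' ≤ #T * (socialCost d Z + Fintype.card N * (2 * δ)) := by gcongr
    _ = #T * socialCost d Z + 2 * Fintype.card N * (#T * δ) := by ring
    _ ≤ (#T + 2 * Fintype.card N) * socialCost d Z := by
        linarith [mul_le_mul_of_nonneg_left hTδ (by positivity : (0 : ℝ) ≤ 2 * Fintype.card N)]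

end Metric

theorem stmt_2_general {N A : Type*} [Fintype N] [Fintype A]
    (hA : 0 < Fintype.card A)
    (rk : N → A → ℕ) (hinj : ∀ i, Function.Injective (rk i))
    (d : (N ⊕ A) → (N ⊕ A) → ℝ)
    (hnn : ∀ a b, 0 ≤ d a b)
    (hsym : ∀ a b, d a b = d b a)
    (htri : ∀ a b c, d a c ≤ d a b + d b c)
    (hcons : ∀ i X Y, rk i X < rk i Y →
      d (Sum.inl i) (Sum.inr X) ≤ d (Sum.inl i) (Sum.inr Y))
    (τ : ℝ) (hτ : τ < 1 / (Fintype.card A : ℝ)) :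
    ∃ X' : A,
      ((Finset.univ.filter (fun i : N => ∀ Y : A, rk i X' ≤ rk i Y)).card : ℝ)
          ≥ τ * (Fintype.card N : ℝ) ∧
      ∀ Z : A,
        ∑ i : N, d (Sum.inl i) (Sum.inr X') ≤
          (1 + 2 / (1 - τ * (Fintype.card A : ℝ))) *
            ∑ i : N, d (Sum.inl i) (Sum.inr Z) := by
  classical
  have : Nonempty A := Fintype.card_pos_iff.mp hA
  set top : N → A := fun i => argmin (rk i)
  have hu : 0 < 1 - τ * Fintype.card A := by
    have hm : (0 : ℝ) < Fintype.card A := by exact_mod_cast hA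
    linarith [(lt_div_iff₀ hm).1 hτ]
  set A' : Finset A := {X | τ * Fintype.card N ≤ #{i | top i = X}}
  obtain ⟨X₀, hX₀⟩ := Fintype.exists_le_card_fiber_of_nsmul_le_card top
    (b := τ * Fintype.card N) (by
      rw [nsmul_eq_mul, ← mul_assoc]
      nlinarith [(Nat.cast_nonneg (Fintype.card N) : (0 : ℝ) ≤ _)])
  obtain ⟨X', hX'A', hX'⟩ := exists_min_image A' (socialCost d) ⟨X₀, by simpa [A'] using hX₀⟩
  refine ⟨X', by simpa [forall_le_iff_argmin_eq (hinj _), A'] using hX'A', fun Z => ?_⟩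
  have hSC := socialCost_nonneg hnn Z
  by_cases hZ : Z ∈ A'
  · exact (hX' Z hZ).trans <|
      le_mul_of_one_le_left hSC (le_add_of_nonneg_right (div_nonneg zero_le_two hu.le))
  have hlow : (#{i | top i = Z} : ℝ) < τ * Fintype.card N := by simpa [A'] using hZ
  have hn : (0 : ℝ) < Fintype.card N :=
    (Nat.cast_nonneg _).lt_of_ne fun h => by
      rw [← h, mul_zero] at hlow; exact (Nat.cast_nonneg _).not_gt hlow
  have hT : Fintype.card N * (1 - τ * Fintype.card A) ≤ #{i | top i ∈ A'} := by
    have := card_sub_mul_le_card_filter_le_card_fiber top ((Nat.cast_nonneg _).trans hlow.le)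
    simp only [A', mem_filter, mem_univ, true_and]
    linarith
  exact le_one_add_div_mul_of_mul_le hn hu zero_le_two hSC hT
    (card_mul_socialCost_le hnn hsym htri hX' _ Z fun i hi =>
      ⟨top i, (mem_filter.1 hi).2, dist_argmin_le hinj hcons i Z⟩)

/-- Pruning lemma: with threshold `τ < 1/m`, the set `A'` of alternatives with
plurality score at least `τ·n` is nonempty, and its best social cost is within a
factor `1 + 2/(1 − τ·m)` of the overall optimum. Rankings are given by rank
functions `rk i : A → ℕ` (injective for each agent; lower rank = more preferred),
and `d` is a consistent pseudometric. -/
theorem stmt_2 {N A : Type*} [Fintype N] [Fintype A] [DecidableEq A]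
    (hA : 0 < Fintype.card A)
    (rk : N → A → ℕ) (hinj : ∀ i, Function.Injective (rk i))
    (d : (N ⊕ A) → (N ⊕ A) → ℝ)
    (hnn : ∀ a b, 0 ≤ d a b)
    (hself : ∀ a, d a a = 0)
    (hsym : ∀ a b, d a b = d b a)
    (htri : ∀ a b c, d a c ≤ d a b + d b c)
    (hcons : ∀ i X Y, rk i X < rk i Y →
      d (Sum.inl i) (Sum.inr X) ≤ d (Sum.inl i) (Sum.inr Y))
    (τ : ℝ) (hτ : τ < 1 / (Fintype.card A : ℝ)) :
    ∃ X' : A,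
      ((Finset.univ.filter (fun i : N => ∀ Y : A, rk i X' ≤ rk i Y)).card : ℝ)
          ≥ τ * (Fintype.card N : ℝ) ∧
      ∀ Z : A,
        ∑ i : N, d (Sum.inl i) (Sum.inr X') ≤
          (1 + 2 / (1 - τ * (Fintype.card A : ℝ))) *
            ∑ i : N, d (Sum.inl i) (Sum.inr Z) :=
  stmt_2_general hA rk hinj d hnn hsym htri hcons τ hτ
end

section
/- Let w be an X-truncated weight function for preference profile σ, i.e., w : N × A → [0,1] satisfies w(i,Y) = 0 whenever agent i strictly prefers X to Y, and Σ_{Y : Y ⪰_i X} w(i,Y) = 1 for every agent i. Then for any pseudometric d consistent with σ, SC(X) ≥ (1/2) · Σ_{Y∈A} w⁺(Y) · d(X,Y), where w⁺(Y) = Σ_{i∈N} w(i,Y). -/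
/-!
Each agent `i` spreads a unit of weight over alternatives it ranks no lower than `X`, and by
consistency each such `Y` is at least as close to `i` as `X` is. The triangle inequality through `i`
then gives `d(X, Y) ≤ 2 d(i, X)` on the support of `w i`, so the `w i`-average of `d(X, ·)` is at
most `2 d(i, X)`; summing over agents gives the bound.
-/

open Finset

lemma dist_le_two_mul_of_dist_le {α : Type*} (d : α → α → ℝ) (hsym : ∀ a b, d a b = d b a)
    (htri : ∀ a b c, d a c ≤ d a b + d b c) {i x y : α} (h : d i y ≤ d i x) :
    d x y ≤ 2 * d i x :=
  calc d x y ≤ d x i + d i y := htri _ _ _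
    _ ≤ 2 * d i x := by rw [hsym x i]; linarith

lemma Finset.sum_mul_le_of_sum_eq_one {ι : Type*} (s : Finset ι) {w f : ι → ℝ} {c : ℝ}
    (hw : ∀ i ∈ s, 0 ≤ w i) (hsum : ∑ i ∈ s, w i = 1) (hf : ∀ i ∈ s, w i ≠ 0 → f i ≤ c) :
    ∑ i ∈ s, w i * f i ≤ c :=
  calc ∑ i ∈ s, w i * f i ≤ ∑ i ∈ s, w i * c := by
        refine sum_le_sum fun i hi => ?_
        by_cases hwi : w i = 0
        · simp [hwi]
        · exact mul_le_mul_of_nonneg_left (hf i hi hwi) (hw i hi)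
    _ = c := by rw [← sum_mul, hsum, one_mul]

lemma dist_le_of_rank_le {N A : Type*} {rk : N → A → ℕ} (hinj : ∀ i, Function.Injective (rk i))
    {d : (N ⊕ A) → (N ⊕ A) → ℝ}
    (hcons : ∀ i Y Z, rk i Y < rk i Z →
      d (Sum.inl i) (Sum.inr Y) ≤ d (Sum.inl i) (Sum.inr Z))
    {i : N} {X Y : A} (h : rk i Y ≤ rk i X) :
    d (Sum.inl i) (Sum.inr Y) ≤ d (Sum.inl i) (Sum.inr X) := by
  rcases h.lt_or_eq with h | h
  · exact hcons i Y X h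
  · rw [hinj i h]

theorem stmt_6_general {N A : Type*} [Fintype N] [Fintype A]
    (rk : N → A → ℕ) (hinj : ∀ i, Function.Injective (rk i))
    (d : (N ⊕ A) → (N ⊕ A) → ℝ)
    (hsym : ∀ a b, d a b = d b a)
    (htri : ∀ a b c, d a c ≤ d a b + d b c)
    (hcons : ∀ i Y Z, rk i Y < rk i Z →
      d (Sum.inl i) (Sum.inr Y) ≤ d (Sum.inl i) (Sum.inr Z))
    (X : A) (w : N → A → ℝ)
    (hw01 : ∀ i Y, w i Y ∈ Set.Icc (0 : ℝ) 1)
    (hw0 : ∀ i Y, rk i X < rk i Y → w i Y = 0)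
    (hw1 : ∀ i, ∑ Y ∈ Finset.univ.filter (fun Y : A => rk i Y ≤ rk i X), w i Y = 1) :
    ∑ i : N, d (Sum.inl i) (Sum.inr X) ≥
      (1 / 2) * ∑ Y : A, (∑ i : N, w i Y) * d (Sum.inr X) (Sum.inr Y) := by
  have hsupp : ∀ i Y, w i Y ≠ 0 → rk i Y ≤ rk i X := fun i Y hY => not_lt.1 (mt (hw0 i Y) hY)
  have hagent : ∀ i, ∑ Y, w i Y * d (Sum.inr X) (Sum.inr Y) ≤ 2 * d (Sum.inl i) (Sum.inr X) := by
    intro i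
    refine sum_mul_le_of_sum_eq_one _ (fun Y _ => (hw01 i Y).1) ?_ fun Y _ hY => ?_
    · rw [← hw1 i, sum_filter_of_ne fun Y _ => hsupp i Y]
    · exact dist_le_two_mul_of_dist_le d hsym htri (dist_le_of_rank_le hinj hcons (hsupp i Y hY))
  calc (1 / 2) * ∑ Y, (∑ i, w i Y) * d (Sum.inr X) (Sum.inr Y)
      = (1 / 2) * ∑ i, ∑ Y, w i Y * d (Sum.inr X) (Sum.inr Y) := by
        simp only [sum_mul]; rw [sum_comm]
    _ ≤ (1 / 2) * ∑ i, 2 * d (Sum.inl i) (Sum.inr X) := by gcongr with i; exact hagent i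
    _ = ∑ i, d (Sum.inl i) (Sum.inr X) := by rw [← mul_sum]; ring

/-- For an `X`-truncated weight function `w`,
`SC(X) ≥ (1/2) Σ_Y w⁺(Y) d(X,Y)` under any consistent pseudometric. -/
theorem stmt_6 {N A : Type*} [Fintype N] [Fintype A] [DecidableEq A]
    (rk : N → A → ℕ) (hinj : ∀ i, Function.Injective (rk i))
    (d : (N ⊕ A) → (N ⊕ A) → ℝ)
    (hnn : ∀ a b, 0 ≤ d a b)
    (hself : ∀ a, d a a = 0)
    (hsym : ∀ a b, d a b = d b a)
    (htri : ∀ a b c, d a c ≤ d a b + d b c)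
    (hcons : ∀ i Y Z, rk i Y < rk i Z →
      d (Sum.inl i) (Sum.inr Y) ≤ d (Sum.inl i) (Sum.inr Z))
    (X : A) (w : N → A → ℝ)
    (hw01 : ∀ i Y, w i Y ∈ Set.Icc (0 : ℝ) 1)
    (hw0 : ∀ i Y, rk i X < rk i Y → w i Y = 0)
    (hw1 : ∀ i, ∑ Y ∈ Finset.univ.filter (fun Y : A => rk i Y ≤ rk i X), w i Y = 1) :
    ∑ i : N, d (Sum.inl i) (Sum.inr X) ≥
      (1 / 2) * ∑ Y : A, (∑ i : N, w i Y) * d (Sum.inr X) (Sum.inr Y) :=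
  stmt_6_general rk hinj d hsym htri hcons X w hw01 hw0 hw1
end

section
/- Suppose f¹ and f² are randomized voting rules whose output distributions on every profile achieve metric distortion at most D₁ᴹ and D₂ᴹ, and utilitarian distortion at most D₁ᵁ and D₂ᵁ, respectively. For β ∈ [0,1], the mixture rule f that runs f¹ with probability β and f² with probability 1−β achieves metric distortion at most β·D₁ᴹ + (1−β)·D₂ᴹ and utilitarian distortion at most D₁ᵁ·D₂ᵁ/(β·D₂ᵁ + (1−β)·D₁ᵁ). -/
/-!
The expected cost or welfare of a mixture is the same mixture of the expected values of its
components. Metric distortion bounds are upper bounds on expected cost, so they mix linearly.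
Utilitarian bounds read `SW(Z) / Dₖ ≤ Eₖ`; mixing these gives
`SW(Z) · (β / D₁ + (1 - β) / D₂) ≤ β E₁ + (1 - β) E₂`, i.e. the weighted harmonic mean of
`D₁` and `D₂` bounds the distortion of the mixture.
-/

open Finset

theorem sum_add_mul_mul {ι R : Type*} [NonUnitalSemiring R] (s : Finset ι)
    (a b : R) (p q g : ι → R) :
    ∑ x ∈ s, (a * p x + b * q x) * g x =
      a * ∑ x ∈ s, p x * g x + b * ∑ x ∈ s, q x * g x := by
  simp only [add_mul, mul_assoc, sum_add_distrib, mul_sum]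

theorem add_le_mul_of_le_mul {R : Type*} [CommSemiring R] [PartialOrder R]
    [IsOrderedRing R] {a b x y c d z : R} (ha : 0 ≤ a) (hb : 0 ≤ b)
    (hx : x ≤ c * z) (hy : y ≤ d * z) :
    a * x + b * y ≤ (a * c + b * d) * z := by
  calc a * x + b * y ≤ a * (c * z) + b * (d * z) := by gcongr
    _ = (a * c + b * d) * z := by ring

theorem le_harmonic_mix_mul {D₁ D₂ β S E₁ E₂ : ℝ} (hD₁ : 0 < D₁) (hD₂ : 0 < D₂)
    (hβ0 : 0 ≤ β) (hβ1 : β ≤ 1) (h₁ : S ≤ D₁ * E₁) (h₂ : S ≤ D₂ * E₂) :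
    S ≤ D₁ * D₂ / (β * D₂ + (1 - β) * D₁) * (β * E₁ + (1 - β) * E₂) := by
  have hβ1' : 0 ≤ 1 - β := sub_nonneg.2 hβ1
  have hden : 0 < β * D₂ + (1 - β) * D₁ := by
    rcases hβ1.lt_or_eq with hlt | rfl
    · exact add_pos_of_nonneg_of_pos (by positivity) (mul_pos (sub_pos.2 hlt) hD₁)
    · simpa using hD₂
  rw [div_mul_eq_mul_div, le_div_iff₀ hden]
  linarith [mul_le_mul_of_nonneg_left h₁ (mul_nonneg hβ0 hD₂.le),
    mul_le_mul_of_nonneg_left h₂ (mul_nonneg hβ1' hD₁.le)]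

theorem stmt_12_general {N A : Type*} [Fintype N] [Fintype A]
    (D1M D2M D1U D2U : ℝ)
    (hD1U : 0 < D1U) (hD2U : 0 < D2U)
    (β : ℝ) (hβ0 : 0 ≤ β) (hβ1 : β ≤ 1)
    (f1 f2 : (N → A → ℕ) → A → ℝ)
    -- metric distortion guarantees of f1 and f2
    (hf1M : ∀ (σ : N → A → ℕ) (d : (N ⊕ A) → (N ⊕ A) → ℝ),
      (∀ a b, 0 ≤ d a b) → (∀ a, d a a = 0) → (∀ a b, d a b = d b a) →
      (∀ a b c, d a c ≤ d a b + d b c) →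
      (∀ i X Y, σ i X < σ i Y →
        d (Sum.inl i) (Sum.inr X) ≤ d (Sum.inl i) (Sum.inr Y)) →
      ∀ Z : A, ∑ X : A, f1 σ X * ∑ i : N, d (Sum.inl i) (Sum.inr X) ≤
        D1M * ∑ i : N, d (Sum.inl i) (Sum.inr Z))
    (hf2M : ∀ (σ : N → A → ℕ) (d : (N ⊕ A) → (N ⊕ A) → ℝ),
      (∀ a b, 0 ≤ d a b) → (∀ a, d a a = 0) → (∀ a b, d a b = d b a) →
      (∀ a b c, d a c ≤ d a b + d b c) →
      (∀ i X Y, σ i X < σ i Y →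
        d (Sum.inl i) (Sum.inr X) ≤ d (Sum.inl i) (Sum.inr Y)) →
      ∀ Z : A, ∑ X : A, f2 σ X * ∑ i : N, d (Sum.inl i) (Sum.inr X) ≤
        D2M * ∑ i : N, d (Sum.inl i) (Sum.inr Z))
    -- utilitarian distortion guarantees of f1 and f2
    (hf1U : ∀ (σ : N → A → ℕ) (u : N → A → ℝ),
      (∀ i X, 0 ≤ u i X) → (∀ i, ∑ X : A, u i X = 1) →
      (∀ i X Y, σ i X < σ i Y → u i Y ≤ u i X) →
      ∀ Z : A, ∑ i : N, u i Z ≤ D1U * ∑ X : A, f1 σ X * ∑ i : N, u i X)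
    (hf2U : ∀ (σ : N → A → ℕ) (u : N → A → ℝ),
      (∀ i X, 0 ≤ u i X) → (∀ i, ∑ X : A, u i X = 1) →
      (∀ i X Y, σ i X < σ i Y → u i Y ≤ u i X) →
      ∀ Z : A, ∑ i : N, u i Z ≤ D2U * ∑ X : A, f2 σ X * ∑ i : N, u i X) :
    -- the mixture rule achieves the combined guarantees
    (∀ (σ : N → A → ℕ) (d : (N ⊕ A) → (N ⊕ A) → ℝ),
      (∀ a b, 0 ≤ d a b) → (∀ a, d a a = 0) → (∀ a b, d a b = d b a) →
      (∀ a b c, d a c ≤ d a b + d b c) →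
      (∀ i X Y, σ i X < σ i Y →
        d (Sum.inl i) (Sum.inr X) ≤ d (Sum.inl i) (Sum.inr Y)) →
      ∀ Z : A,
        ∑ X : A, (β * f1 σ X + (1 - β) * f2 σ X) *
            ∑ i : N, d (Sum.inl i) (Sum.inr X) ≤
          (β * D1M + (1 - β) * D2M) * ∑ i : N, d (Sum.inl i) (Sum.inr Z)) ∧
    (∀ (σ : N → A → ℕ) (u : N → A → ℝ),
      (∀ i X, 0 ≤ u i X) → (∀ i, ∑ X : A, u i X = 1) →
      (∀ i X Y, σ i X < σ i Y → u i Y ≤ u i X) →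
      ∀ Z : A,
        ∑ i : N, u i Z ≤
          (D1U * D2U / (β * D2U + (1 - β) * D1U)) *
            ∑ X : A, (β * f1 σ X + (1 - β) * f2 σ X) * ∑ i : N, u i X) := by
  refine ⟨fun σ d h0 h1 h2 h3 h4 Z => ?_, fun σ u h0 h1 h2 Z => ?_⟩
  · rw [sum_add_mul_mul]
    exact add_le_mul_of_le_mul hβ0 (sub_nonneg.2 hβ1)
      (hf1M σ d h0 h1 h2 h3 h4 Z) (hf2M σ d h0 h1 h2 h3 h4 Z)
  · rw [sum_add_mul_mul]
    exact le_harmonic_mix_mul hD1U hD2U hβ0 hβ1 (hf1U σ u h0 h1 h2 Z) (hf2U σ u h0 h1 h2 Z)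

/-- Mixing two randomized voting rules with probability `β` combines their
metric distortion guarantees linearly and their utilitarian distortion
guarantees harmonically. Profiles are rank functions `σ : N → A → ℕ`. -/
theorem stmt_12 {N A : Type*} [Fintype N] [Fintype A]
    (D1M D2M D1U D2U : ℝ)
    (hD1M : 0 < D1M) (hD2M : 0 < D2M) (hD1U : 0 < D1U) (hD2U : 0 < D2U)
    (β : ℝ) (hβ0 : 0 ≤ β) (hβ1 : β ≤ 1)
    (f1 f2 : (N → A → ℕ) → A → ℝ)
    (hf1nn : ∀ σ X, 0 ≤ f1 σ X) (hf1sum : ∀ σ, ∑ X : A, f1 σ X = 1)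
    (hf2nn : ∀ σ X, 0 ≤ f2 σ X) (hf2sum : ∀ σ, ∑ X : A, f2 σ X = 1)
    -- metric distortion guarantees of f1 and f2
    (hf1M : ∀ (σ : N → A → ℕ) (d : (N ⊕ A) → (N ⊕ A) → ℝ),
      (∀ a b, 0 ≤ d a b) → (∀ a, d a a = 0) → (∀ a b, d a b = d b a) →
      (∀ a b c, d a c ≤ d a b + d b c) →
      (∀ i X Y, σ i X < σ i Y →
        d (Sum.inl i) (Sum.inr X) ≤ d (Sum.inl i) (Sum.inr Y)) →
      ∀ Z : A, ∑ X : A, f1 σ X * ∑ i : N, d (Sum.inl i) (Sum.inr X) ≤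
        D1M * ∑ i : N, d (Sum.inl i) (Sum.inr Z))
    (hf2M : ∀ (σ : N → A → ℕ) (d : (N ⊕ A) → (N ⊕ A) → ℝ),
      (∀ a b, 0 ≤ d a b) → (∀ a, d a a = 0) → (∀ a b, d a b = d b a) →
      (∀ a b c, d a c ≤ d a b + d b c) →
      (∀ i X Y, σ i X < σ i Y →
        d (Sum.inl i) (Sum.inr X) ≤ d (Sum.inl i) (Sum.inr Y)) →
      ∀ Z : A, ∑ X : A, f2 σ X * ∑ i : N, d (Sum.inl i) (Sum.inr X) ≤
        D2M * ∑ i : N, d (Sum.inl i) (Sum.inr Z))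
    -- utilitarian distortion guarantees of f1 and f2
    (hf1U : ∀ (σ : N → A → ℕ) (u : N → A → ℝ),
      (∀ i X, 0 ≤ u i X) → (∀ i, ∑ X : A, u i X = 1) →
      (∀ i X Y, σ i X < σ i Y → u i Y ≤ u i X) →
      ∀ Z : A, ∑ i : N, u i Z ≤ D1U * ∑ X : A, f1 σ X * ∑ i : N, u i X)
    (hf2U : ∀ (σ : N → A → ℕ) (u : N → A → ℝ),
      (∀ i X, 0 ≤ u i X) → (∀ i, ∑ X : A, u i X = 1) →
      (∀ i X Y, σ i X < σ i Y → u i Y ≤ u i X) →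
      ∀ Z : A, ∑ i : N, u i Z ≤ D2U * ∑ X : A, f2 σ X * ∑ i : N, u i X) :
    -- the mixture rule achieves the combined guarantees
    (∀ (σ : N → A → ℕ) (d : (N ⊕ A) → (N ⊕ A) → ℝ),
      (∀ a b, 0 ≤ d a b) → (∀ a, d a a = 0) → (∀ a b, d a b = d b a) →
      (∀ a b c, d a c ≤ d a b + d b c) →
      (∀ i X Y, σ i X < σ i Y →
        d (Sum.inl i) (Sum.inr X) ≤ d (Sum.inl i) (Sum.inr Y)) →
      ∀ Z : A,
        ∑ X : A, (β * f1 σ X + (1 - β) * f2 σ X) *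
            ∑ i : N, d (Sum.inl i) (Sum.inr X) ≤
          (β * D1M + (1 - β) * D2M) * ∑ i : N, d (Sum.inl i) (Sum.inr Z)) ∧
    (∀ (σ : N → A → ℕ) (u : N → A → ℝ),
      (∀ i X, 0 ≤ u i X) → (∀ i, ∑ X : A, u i X = 1) →
      (∀ i X Y, σ i X < σ i Y → u i Y ≤ u i X) →
      ∀ Z : A,
        ∑ i : N, u i Z ≤
          (D1U * D2U / (β * D2U + (1 - β) * D1U)) *
            ∑ X : A, (β * f1 σ X + (1 - β) * f2 σ X) * ∑ i : N, u i X) :=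
  stmt_12_general D1M D2M D1U D2U hD1U hD2U β hβ0 hβ1 f1 f2 hf1M hf2M hf1U hf2U
end

section
/- For reals S₁, S₂ with 0 ≤ S₁ ≤ S₂ and S₁ + S₂ ≤ 2·n·H (where n > 0, H ≥ 1, m ≥ 1), the inequality (S₂ − S₁)/(2m) + S₁²/(2·n·m·H) ≥ S₂²/(4·n·m·H) holds. -/
theorem sq_sub_sq_le_mul_sub {α : Type*} [CommRing α] [LinearOrder α] [IsStrictOrderedRing α]
    {a b c : α} (hab : a ≤ b) (h : a + b ≤ c) : b ^ 2 - a ^ 2 ≤ c * (b - a) :=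
  calc b ^ 2 - a ^ 2 = (b - a) * (a + b) := by ring
    _ ≤ (b - a) * c := mul_le_mul_of_nonneg_left h (sub_nonneg.2 hab)
    _ = c * (b - a) := mul_comm _ _

theorem stmt_17_general (n m H S1 S2 : ℝ) (hn : 0 < n) (hm : 1 ≤ m) (hH : 1 ≤ H)
    (hS12 : S1 ≤ S2) (hsum : S1 + S2 ≤ 2 * n * H) :
    (S2 - S1) / (2 * m) + S1 ^ 2 / (2 * n * m * H) ≥
      S2 ^ 2 / (4 * n * m * H) := by
  have hm0 : 0 < m := by linarith
  have hH0 : 0 < H := by linarith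
  have key : S2 ^ 2 ≤ 2 * n * H * (S2 - S1) + 2 * S1 ^ 2 := by
    linarith [sq_sub_sq_le_mul_sub hS12 hsum, sq_nonneg S1]
  calc S2 ^ 2 / (4 * n * m * H)
      ≤ (2 * n * H * (S2 - S1) + 2 * S1 ^ 2) / (4 * n * m * H) := by gcongr
    _ = (S2 - S1) / (2 * m) + S1 ^ 2 / (2 * n * m * H) := by field_simp; ring

/-- Key algebraic step in the top-`t` Truncated Harmonic analysis. -/
theorem stmt_17 (n m H S1 S2 : ℝ) (hn : 0 < n) (hm : 1 ≤ m) (hH : 1 ≤ H)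
    (hS1 : 0 ≤ S1) (hS12 : S1 ≤ S2) (hsum : S1 + S2 ≤ 2 * n * H) :
    (S2 - S1) / (2 * m) + S1 ^ 2 / (2 * n * m * H) ≥
      S2 ^ 2 / (4 * n * m * H) :=
  stmt_17_general n m H S1 S2 hn hm hH hS12 hsum
end
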